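/- Let K be a valued field, B₀ ⊆ Kⁿ a ball, and C = B₁ ∪ … ∪ B_m ⊆ B₀ a union of finitely many disjoint points and balls Bᵢ, and similarly C' = B'₁ ∪ … ∪ B'_m. Suppose there exists a risometry φ : B₀ → B₀ with φ(Bᵢ) = B'ᵢ for all i. Then any other risometry φ' : B₀ → B₀ with φ'(C) = C' also satisfies φ'(Bᵢ) = B'ᵢ for every i. -/

import Mathlib

/-!
Replacing `φ'` by `ψ = φ⁻¹ ∘ φ'`, it suffices that a risometry `ψ` of `B₀` with `ψ(C) = C` maps
every piece `Bᵢ` into itself.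

First, `ψ` maps each piece into a single piece: two points `x ≠ y` of a piece span the progression
`x + t (y - x)`, `t ∈ ℕ`, inside it, whose points are pairwise at distance exactly `|y - x|`
because the residue characteristic is `0`. By pigeonhole two of their images lie in a common piece,
which is then a ball containing two points at distance `|y - x|`, hence all the images.

Second, along an orbit of `ψ` every step `ψ^[j+1] x - ψ^[j] x` equals `ψ x - x` up to a strictly
smaller error, so `|ψ^[k] x - x| = |ψ x - x|` for `k ≥ 1`. By pigeonhole the orbit of `x ∈ Bᵢ`
returns to `Bᵢ` (pulling back along `ψ⁻¹`, which also maps pieces into pieces), and then the ball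
`Bᵢ` contains `ψ x`, being at distance `|ψ^[k] x - x|` from `x`.
-/

/-- The sup-norm on `Kⁿ` induced by a valuation `v : K → Γ₀`. -/
noncomputable def supVal {K Γ₀ : Type*} [Field K] [LinearOrderedCommGroupWithZero Γ₀]
    (v : Valuation K Γ₀) {n : ℕ} (x : Fin n → K) : Γ₀ :=
  letI : OrderBot Γ₀ := { bot := 0, bot_le := fun _ => zero_le' }
  Finset.univ.sup fun i => v (x i)

/-- A (valuative) ball in `Kⁿ` with respect to the sup-norm. -/
def IsBall {K Γ₀ : Type*} [Field K] [LinearOrderedCommGroupWithZero Γ₀]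
    (v : Valuation K Γ₀) {n : ℕ} (B : Set (Fin n → K)) : Prop :=
  B.Infinite ∧ ∀ x ∈ B, ∀ x' ∈ B, ∀ y : Fin n → K,
    supVal v (x - y) ≤ supVal v (x - x') → y ∈ B

/-- A risometry from `B₁` onto `B₂`. -/
def IsRisometryOn {K Γ₀ : Type*} [Field K] [LinearOrderedCommGroupWithZero Γ₀]
    (v : Valuation K Γ₀) {n : ℕ} (φ : (Fin n → K) → (Fin n → K))
    (B₁ B₂ : Set (Fin n → K)) : Prop :=
  Set.BijOn φ B₁ B₂ ∧
    ∀ x₁ ∈ B₁, ∀ x₂ ∈ B₁, x₁ ≠ x₂ →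
      supVal v (φ x₁ - φ x₂ - (x₁ - x₂)) < supVal v (x₁ - x₂)

open Set Function

section SupVal

variable {K Γ₀ : Type*} [Field K] [LinearOrderedCommGroupWithZero Γ₀] (v : Valuation K Γ₀)
  {n : ℕ}

theorem le_supVal (x : Fin n → K) (i : Fin n) : v (x i) ≤ supVal v x := by
  let _ : OrderBot Γ₀ := { bot := 0, bot_le := fun _ => zero_le }
  exact Finset.le_sup (f := fun i => v (x i)) (Finset.mem_univ i)

theorem supVal_le {x : Fin n → K} {c : Γ₀} (h : ∀ i, v (x i) ≤ c) : supVal v x ≤ c := by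
  let _ : OrderBot Γ₀ := { bot := 0, bot_le := fun _ => zero_le }
  exact Finset.sup_le fun i _ => h i

@[simp]
theorem supVal_eq_zero_iff {x : Fin n → K} : supVal v x = 0 ↔ x = 0 := by
  constructor
  · exact fun h => funext fun i => v.zero_iff.mp (le_antisymm (h ▸ le_supVal v x i) zero_le)
  · rintro rfl
    exact le_antisymm (supVal_le v fun i => by simp) zero_le

@[simp]
theorem supVal_zero : supVal v (0 : Fin n → K) = 0 := (supVal_eq_zero_iff v).mpr rfl

theorem supVal_add_le (x y : Fin n → K) : supVal v (x + y) ≤ max (supVal v x) (supVal v y) :=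
  supVal_le v fun i => (v.map_add _ _).trans (max_le_max (le_supVal v x i) (le_supVal v y i))

theorem supVal_add_lt {x y : Fin n → K} {r : Γ₀} (hx : supVal v x < r) (hy : supVal v y < r) :
    supVal v (x + y) < r :=
  (supVal_add_le v x y).trans_lt (max_lt hx hy)

@[simp]
theorem supVal_neg (x : Fin n → K) : supVal v (-x) = supVal v x := by
  simp only [supVal, Pi.neg_apply, Valuation.map_neg]

theorem supVal_sub_comm (x y : Fin n → K) : supVal v (x - y) = supVal v (y - x) := by
  rw [← supVal_neg, neg_sub]

theorem supVal_smul_le (c : K) (x : Fin n → K) : supVal v (c • x) ≤ v c * supVal v x :=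
  supVal_le v fun i => by
    rw [Pi.smul_apply, smul_eq_mul, v.map_mul]
    gcongr
    exact le_supVal v x i

theorem supVal_smul (c : K) (x : Fin n → K) : supVal v (c • x) = v c * supVal v x := by
  refine le_antisymm (supVal_smul_le v c x) ?_
  rcases eq_or_ne c 0 with rfl | hc
  · simp
  calc v c * supVal v x = v c * supVal v (c⁻¹ • c • x) := by rw [inv_smul_smul₀ hc]
    _ ≤ v c * (v c⁻¹ * supVal v (c • x)) := by gcongr; exact supVal_smul_le v _ _
    _ = supVal v (c • x) := by
      rw [← mul_assoc, ← v.map_mul, mul_inv_cancel₀ hc, v.map_one, one_mul]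

theorem supVal_eq_of_supVal_sub_lt {x y : Fin n → K} (h : supVal v (x - y) < supVal v y) :
    supVal v x = supVal v y := by
  have hle : supVal v x ≤ supVal v y := by
    simpa [max_eq_right h.le] using supVal_add_le v (x - y) y
  refine hle.antisymm (not_lt.mp fun hlt => ?_)
  have := supVal_add_lt v (x := y - x) (y := x) (by rwa [supVal_sub_comm]) hlt
  simp at this

theorem supVal_add_eq_left {x y : Fin n → K} (h : supVal v y < supVal v x) :
    supVal v (x + y) = supVal v x :=
  supVal_eq_of_supVal_sub_lt v (by rwa [add_sub_cancel_left])

theorem supVal_sum_lt {ι : Type*} (s : Finset ι) (f : ι → Fin n → K) {r : Γ₀} (hr : r ≠ 0)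
    (h : ∀ i ∈ s, supVal v (f i) < r) : supVal v (∑ i ∈ s, f i) < r := by
  induction s using Finset.cons_induction with
  | empty => simpa using zero_lt_iff.mpr hr
  | cons a s ha ih =>
    rw [Finset.sum_cons]
    exact supVal_add_lt v (h a (Finset.mem_cons_self a s))
      (ih fun i hi => h i (Finset.mem_cons_of_mem hi))

end SupVal

section Residue

variable {K Γ₀ : Type*} [Field K] [LinearOrderedCommGroupWithZero Γ₀] {v : Valuation K Γ₀}

theorem Valuation.map_intCast_eq_one (hres : ∀ k : ℕ, k ≠ 0 → v k = 1) {k : ℤ} (hk : k ≠ 0) :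
    v (k : K) = 1 := by
  obtain ⟨j, rfl | rfl⟩ := Int.eq_nat_or_neg k <;>
    simp_all

theorem Valuation.map_intCast_le_one (hres : ∀ k : ℕ, k ≠ 0 → v k = 1) (k : ℤ) :
    v (k : K) ≤ 1 := by
  rcases eq_or_ne k 0 with rfl | hk
  · simp
  · exact (v.map_intCast_eq_one hres hk).le

end Residue

theorem Set.image_eq_self_of_forall_mapsTo {ι α : Type*} {B : ι → Set α} {f : α → α}
    (hdisj : Pairwise (Disjoint on B)) (hC : f '' ⋃ i, B i = ⋃ i, B i)
    (h : ∀ i, MapsTo f (B i) (B i)) (i : ι) : f '' B i = B i := by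
  refine (h i).image_subset.antisymm fun y hy => ?_
  obtain ⟨x, hx, rfl⟩ : y ∈ f '' ⋃ i, B i := by rw [hC]; exact mem_iUnion_of_mem i hy
  obtain ⟨j, hxj⟩ := mem_iUnion.mp hx
  obtain rfl : j = i := hdisj.eq (not_disjoint_iff.mpr ⟨f x, h j hxj, hy⟩)
  exact mem_image_of_mem f hxj

theorem isBall_of_mem_of_ne {K Γ₀ : Type*} [Field K] [LinearOrderedCommGroupWithZero Γ₀]
    {v : Valuation K Γ₀} {n : ℕ} {P : Set (Fin n → K)} (hP : IsBall v P ∨ ∃ p, P = {p})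
    {x y : Fin n → K} (hx : x ∈ P) (hy : y ∈ P) (hxy : x ≠ y) : IsBall v P := by
  rcases hP with hP | ⟨p, rfl⟩
  · exact hP
  · exact absurd (hx.trans hy.symm) hxy

namespace IsRisometryOn

variable {K Γ₀ : Type*} [Field K] [LinearOrderedCommGroupWithZero Γ₀] {v : Valuation K Γ₀}
  {n : ℕ} {B₀ B₁ B₂ B₃ : Set (Fin n → K)} {f g ψ : (Fin n → K) → (Fin n → K)}

theorem supVal_sub (hψ : IsRisometryOn v ψ B₁ B₂) {x y : Fin n → K} (hx : x ∈ B₁)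
    (hy : y ∈ B₁) : supVal v (ψ x - ψ y) = supVal v (x - y) := by
  rcases eq_or_ne x y with rfl | hxy
  · simp
  · exact supVal_eq_of_supVal_sub_lt v (hψ.2 x hx y hy hxy)

theorem comp (hg : IsRisometryOn v g B₂ B₃) (hf : IsRisometryOn v f B₁ B₂) :
    IsRisometryOn v (g ∘ f) B₁ B₃ := by
  refine ⟨hg.1.comp hf.1, fun x hx y hy hxy => ?_⟩
  have hfxy : f x ≠ f y := fun h => hxy (hf.1.injOn hx hy h)
  have e : g (f x) - g (f y) - (x - y)
      = (g (f x) - g (f y) - (f x - f y)) + (f x - f y - (x - y)) := by abel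
  rw [comp_apply, comp_apply, e]
  refine supVal_add_lt v ?_ (hf.2 x hx y hy hxy)
  rw [← hf.supVal_sub hx hy]
  exact hg.2 _ (hf.1.mapsTo hx) _ (hf.1.mapsTo hy) hfxy

theorem invFunOn (hψ : IsRisometryOn v ψ B₁ B₂) : IsRisometryOn v (invFunOn ψ B₁) B₂ B₁ := by
  have hinv := hψ.1.invOn_invFunOn
  refine ⟨hψ.1.symm hinv.symm, fun x hx y hy hxy => ?_⟩
  set g := Function.invFunOn ψ B₁
  have hgx : g x ∈ B₁ := (hψ.1.symm hinv.symm).mapsTo hx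
  have hgy : g y ∈ B₁ := (hψ.1.symm hinv.symm).mapsTo hy
  have hψg : ψ (g x) = x ∧ ψ (g y) = y := ⟨hinv.2 hx, hinv.2 hy⟩
  have hgxy : g x ≠ g y := fun h => hxy (by rw [← hψg.1, ← hψg.2, h])
  have e : g x - g y - (x - y) = -(ψ (g x) - ψ (g y) - (g x - g y)) := by
    rw [hψg.1, hψg.2]; abel
  calc supVal v (g x - g y - (x - y))
      = supVal v (ψ (g x) - ψ (g y) - (g x - g y)) := by rw [e, supVal_neg]
    _ < supVal v (g x - g y) := hψ.2 _ hgx _ hgy hgxy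
    _ = supVal v (x - y) := by rw [← hψ.supVal_sub hgx hgy, hψg.1, hψg.2]

theorem supVal_iterate_succ_sub_iterate_sub_lt (hψ : IsRisometryOn v ψ B₀ B₀)
    {x : Fin n → K} (hx : x ∈ B₀) (hψx : ψ x ≠ x) (j : ℕ) :
    supVal v (ψ^[j + 1] x - ψ^[j] x - (ψ x - x)) < supVal v (ψ x - x) := by
  have hr : supVal v (ψ x - x) ≠ 0 := by simpa [sub_eq_zero] using hψx
  induction j with
  | zero => simpa using zero_lt_iff.mpr hr
  | succ j ih =>
    have hxj : ψ^[j] x ∈ B₀ := hψ.1.mapsTo.iterate j hx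
    have hxj' : ψ^[j + 1] x ∈ B₀ := hψ.1.mapsTo.iterate (j + 1) hx
    have hdj : supVal v (ψ^[j + 1] x - ψ^[j] x) = supVal v (ψ x - x) :=
      supVal_eq_of_supVal_sub_lt v ih
    have hne : ψ^[j + 1] x ≠ ψ^[j] x := by
      rw [← sub_ne_zero, Ne, ← supVal_eq_zero_iff v, hdj]
      exact hr
    have hstep := hψ.2 _ hxj' _ hxj hne
    rw [hdj, ← iterate_succ_apply' ψ (j + 1), ← iterate_succ_apply' ψ j] at hstep
    have e : ψ^[j + 1 + 1] x - ψ^[j + 1] x - (ψ x - x)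
        = (ψ^[j + 1 + 1] x - ψ^[j + 1] x - (ψ^[j + 1] x - ψ^[j] x))
          + (ψ^[j + 1] x - ψ^[j] x - (ψ x - x)) := by abel
    rw [e]
    exact supVal_add_lt v hstep ih

theorem supVal_iterate_sub_self (hres : ∀ k : ℕ, k ≠ 0 → v k = 1)
    (hψ : IsRisometryOn v ψ B₀ B₀) {x : Fin n → K} (hx : x ∈ B₀) {k : ℕ} (hk : k ≠ 0) :
    supVal v (ψ^[k] x - x) = supVal v (ψ x - x) := by
  by_cases hψx : ψ x = x
  · rw [iterate_fixed hψx, hψx]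
  have hr : supVal v (ψ x - x) ≠ 0 := by simpa [sub_eq_zero] using hψx
  have hsum : ψ^[k] x - x
      = (k : K) • (ψ x - x) + ∑ j ∈ Finset.range k, (ψ^[j + 1] x - ψ^[j] x - (ψ x - x)) := by
    rw [Finset.sum_sub_distrib, Finset.sum_range_sub (fun j => ψ^[j] x), Finset.sum_const,
      Finset.card_range, Nat.cast_smul_eq_nsmul, iterate_zero_apply]
    abel
  have hlin : supVal v ((k : K) • (ψ x - x)) = supVal v (ψ x - x) := by
    rw [supVal_smul, hres k hk, one_mul]
  rw [hsum, supVal_add_eq_left v (by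
    rw [hlin]
    exact supVal_sum_lt v _ _ hr fun j _ => hψ.supVal_iterate_succ_sub_iterate_sub_lt hx hψx j),
    hlin]

theorem apply_mem_of_iterate_mem (hres : ∀ k : ℕ, k ≠ 0 → v k = 1)
    (hψ : IsRisometryOn v ψ B₀ B₀) {P : Set (Fin n → K)} (hP : IsBall v P ∨ ∃ p, P = {p})
    {x : Fin n → K} (hx₀ : x ∈ B₀) (hx : x ∈ P) {k : ℕ} (hk : k ≠ 0) (hkx : ψ^[k] x ∈ P) :
    ψ x ∈ P := by
  have e := hψ.supVal_iterate_sub_self hres hx₀ hk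
  by_cases hfix : ψ^[k] x = x
  · rw [hfix, sub_self, supVal_zero, eq_comm, supVal_eq_zero_iff, sub_eq_zero] at e
    rwa [e]
  · refine (isBall_of_mem_of_ne hP hx hkx (Ne.symm hfix)).2 x hx _ hkx _ ?_
    rw [supVal_sub_comm, ← e, supVal_sub_comm]

variable {ι : Type*} [Finite ι] {B : ι → Set (Fin n → K)}

theorem exists_mem_piece_of_mem_piece (hres : ∀ k : ℕ, k ≠ 0 → v k = 1)
    (hψ : IsRisometryOn v ψ B₀ B₀) (hBsub : ∀ i, B i ⊆ B₀)
    (hshape : ∀ i, IsBall v (B i) ∨ ∃ p, B i = {p}) (hC : MapsTo ψ (⋃ i, B i) (⋃ i, B i))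
    {i : ι} {x y : Fin n → K} (hx : x ∈ B i) (hy : y ∈ B i) : ∃ j, ψ x ∈ B j ∧ ψ y ∈ B j := by
  rcases eq_or_ne x y with rfl | hxy
  · obtain ⟨j, hj⟩ := mem_iUnion.mp (hC (mem_iUnion_of_mem i hx))
    exact ⟨j, hj, hj⟩
  set r := supVal v (y - x)
  have hr : r ≠ 0 := by simpa [r, sub_eq_zero] using hxy.symm
  set z : ℕ → Fin n → K := fun t => x + (t : K) • (y - x)
  have hz_sub : ∀ a b : ℕ, supVal v (z a - z b) = v ((a - b : ℤ) : K) * r := by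
    intro a b
    simp only [z]
    rw [add_sub_add_left_eq_sub, ← sub_smul, supVal_smul]
    push_cast
    rfl
  have hz_sub_le : ∀ a b : ℕ, supVal v (z a - z b) ≤ r := fun a b => by
    rw [hz_sub]
    exact mul_le_of_le_one_left' (v.map_intCast_le_one hres _)
  have hz : ∀ t, z t ∈ B i := fun t =>
    (isBall_of_mem_of_ne (hshape i) hx hy hxy).2 x hx y hy _ (by
      rw [supVal_sub_comm v x y]; simpa [z] using hz_sub_le 0 t)
  choose c hc using fun t => mem_iUnion.mp (hC (mem_iUnion_of_mem i (hz t)))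
  obtain ⟨s, t, hst, hcst⟩ := Finite.exists_ne_map_eq_of_infinite c
  have hct : ψ (z t) ∈ B (c s) := hcst ▸ hc t
  have hdist : supVal v (ψ (z s) - ψ (z t)) = r := by
    rw [hψ.supVal_sub (hBsub i (hz s)) (hBsub i (hz t)), hz_sub,
      v.map_intCast_eq_one hres (sub_ne_zero.mpr (by exact_mod_cast hst)), one_mul]
  have hball : IsBall v (B (c s)) := isBall_of_mem_of_ne (hshape _) (hc s) hct fun h => by
    rw [h, sub_self, supVal_zero] at hdist
    exact hr hdist.symm
  have hmem : ∀ a, ψ (z a) ∈ B (c s) := fun a => hball.2 _ (hc s) _ hct _ (by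
    rw [hdist, hψ.supVal_sub (hBsub i (hz s)) (hBsub i (hz a))]
    exact hz_sub_le s a)
  exact ⟨c s, by simpa [z] using hmem 0, by simpa [z] using hmem 1⟩

theorem exists_mem_piece_of_iterate_mem_piece (hres : ∀ k : ℕ, k ≠ 0 → v k = 1)
    (hψ : IsRisometryOn v ψ B₀ B₀) (hBsub : ∀ i, B i ⊆ B₀)
    (hshape : ∀ i, IsBall v (B i) ∨ ∃ p, B i = {p}) (hC : ψ '' ⋃ i, B i = ⋃ i, B i)
    (s : ℕ) {x y : Fin n → K} (hx : x ∈ ⋃ i, B i) (hy : y ∈ ⋃ i, B i)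
    (h : ∃ j, ψ^[s] x ∈ B j ∧ ψ^[s] y ∈ B j) : ∃ j, x ∈ B j ∧ y ∈ B j := by
  have hCB₀ : ⋃ i, B i ⊆ B₀ := iUnion_subset hBsub
  have hmaps : MapsTo ψ (⋃ i, B i) (⋃ i, B i) := mapsTo_iff_image_subset.mpr hC.subset
  have hleft : LeftInvOn (Function.invFunOn ψ B₀) ψ B₀ := hψ.1.injOn.leftInvOn_invFunOn
  have hmaps_inv : MapsTo (Function.invFunOn ψ B₀) (⋃ i, B i) (⋃ i, B i) := by
    intro w hw
    rw [← hC] at hw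
    obtain ⟨w, hw, rfl⟩ := hw
    rwa [hleft (hCB₀ hw)]
  induction s generalizing x y with
  | zero => exact h
  | succ s ih =>
    obtain ⟨j, hxj, hyj⟩ := ih (hmaps hx) (hmaps hy) (by simpa only [iterate_succ_apply] using h)
    simpa only [hleft (hCB₀ hx), hleft (hCB₀ hy)] using
      hψ.invFunOn.exists_mem_piece_of_mem_piece hres hBsub hshape hmaps_inv hxj hyj

theorem mapsTo_piece (hres : ∀ k : ℕ, k ≠ 0 → v k = 1) (hψ : IsRisometryOn v ψ B₀ B₀)
    (hBsub : ∀ i, B i ⊆ B₀) (hshape : ∀ i, IsBall v (B i) ∨ ∃ p, B i = {p})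
    (hdisj : Pairwise (Disjoint on B)) (hC : ψ '' ⋃ i, B i = ⋃ i, B i) (i : ι) :
    MapsTo ψ (B i) (B i) := by
  intro x hx
  have hmaps : MapsTo ψ (⋃ i, B i) (⋃ i, B i) := mapsTo_iff_image_subset.mpr hC.subset
  have horbit : ∀ t, ψ^[t] x ∈ ⋃ i, B i := fun t => hmaps.iterate t (mem_iUnion_of_mem i hx)
  choose c hc using fun t => mem_iUnion.mp (horbit t)
  obtain ⟨s, t, hst, hcst⟩ :=
    Finite.exists_lt_map_eq_of_forall_mem (f := c) (fun _ => mem_univ _) finite_univ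
  have hk : ψ^[s] (ψ^[t - s] x) = ψ^[t] x := by
    rw [← iterate_add_apply, Nat.add_sub_cancel' hst.le]
  obtain ⟨j, hxj, hkj⟩ := hψ.exists_mem_piece_of_iterate_mem_piece hres hBsub hshape hC s
    (mem_iUnion_of_mem i hx) (horbit _) ⟨c s, hc s, hk ▸ hcst ▸ hc t⟩
  obtain rfl : j = i := hdisj.eq (not_disjoint_iff.mpr ⟨x, hxj, hx⟩)
  exact hψ.apply_mem_of_iterate_mem hres (hshape j) (hBsub j hxj) hxj
    (Nat.sub_ne_zero_of_lt hst) hkj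

end IsRisometryOn

theorem risometry_pieces_unique_general {K Γ₀ : Type*} [Field K]
    [LinearOrderedCommGroupWithZero Γ₀] (v : Valuation K Γ₀)
    (hres : ∀ m : ℕ, m ≠ 0 → v (m : K) = 1)
    {n m : ℕ} (B₀ : Set (Fin n → K))
    (B B' : Fin m → Set (Fin n → K))
    (hBsub : ∀ i, B i ⊆ B₀)
    (hBshape : ∀ i, IsBall v (B i) ∨ ∃ p, B i = {p})
    (hBdisj : ∀ i j, i ≠ j → Disjoint (B i) (B j))
    (φ : (Fin n → K) → (Fin n → K)) (hφ : IsRisometryOn v φ B₀ B₀)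
    (hφB : ∀ i, φ '' B i = B' i)
    (φ' : (Fin n → K) → (Fin n → K)) (hφ' : IsRisometryOn v φ' B₀ B₀)
    (hφ'C : φ' '' (⋃ i, B i) = ⋃ i, B' i) :
    ∀ i, φ' '' B i = B' i := by
  set ψ := invFunOn φ B₀ ∘ φ'
  have hψ : IsRisometryOn v ψ B₀ B₀ := hφ.invFunOn.comp hφ'
  have hC : ψ '' ⋃ i, B i = ⋃ i, B i := by
    rw [image_comp, hφ'C]
    simp_rw [← hφB, ← image_iUnion]
    exact (hφ.1.injOn.leftInvOn_invFunOn.mono (iUnion_subset hBsub)).image_image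
  have hψB : ∀ i, ψ '' B i = B i := image_eq_self_of_forall_mapsTo hBdisj hC
    (hψ.mapsTo_piece hres hBsub hBshape hBdisj hC)
  intro i
  calc φ' '' B i = φ '' (ψ '' B i) := by
        rw [image_image]
        exact image_congr fun w hw =>
          (hφ.1.surjOn.rightInvOn_invFunOn (hφ'.1.mapsTo (hBsub i hw))).symm
    _ = B' i := by rw [hψB, hφB]

/-- if some risometry `φ : B₀ → B₀` maps `Bᵢ` onto `B'ᵢ` for all `i`,
then every risometry `φ' : B₀ → B₀` with `φ'(C) = C'` (where `C = ⋃ᵢ Bᵢ`,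
`C' = ⋃ᵢ B'ᵢ`) also satisfies `φ'(Bᵢ) = B'ᵢ` for every `i`. -/
theorem risometry_pieces_unique {K Γ₀ : Type*} [Field K]
    [LinearOrderedCommGroupWithZero Γ₀] (v : Valuation K Γ₀) [CharZero K]
    (hres : ∀ m : ℕ, m ≠ 0 → v (m : K) = 1)
    {n m : ℕ} (B₀ : Set (Fin n → K)) (hB₀ : IsBall v B₀)
    (B B' : Fin m → Set (Fin n → K))
    (hBsub : ∀ i, B i ⊆ B₀) (hB'sub : ∀ i, B' i ⊆ B₀)
    (hBshape : ∀ i, IsBall v (B i) ∨ ∃ p, B i = {p})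
    (hB'shape : ∀ i, IsBall v (B' i) ∨ ∃ p, B' i = {p})
    (hBdisj : ∀ i j, i ≠ j → Disjoint (B i) (B j))
    (hB'disj : ∀ i j, i ≠ j → Disjoint (B' i) (B' j))
    (φ : (Fin n → K) → (Fin n → K)) (hφ : IsRisometryOn v φ B₀ B₀)
    (hφB : ∀ i, φ '' B i = B' i)
    (φ' : (Fin n → K) → (Fin n → K)) (hφ' : IsRisometryOn v φ' B₀ B₀)
    (hφ'C : φ' '' (⋃ i, B i) = ⋃ i, B' i) :
    ∀ i, φ' '' B i = B' i :=
  risometry_pieces_unique_general v hres B₀ B B' hBsub hBshape hBdisj φ hφ hφB φ' hφ' hφ'C
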